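/- The set of ancestral X-clusters of G forms a hierarchy: if C₁ and C₂ are ancestral X-clusters then C₁ ∩ C₂ ∈ {∅, C₁, C₂}. -/
import Mathlib


open Relation

variable {V : Type*}

/-- `u ⪯ v` : the reflexive–transitive closure of the arc relation `E`. -/
def preceq (E : V → V → Prop) : V → V → Prop := Relation.ReflTransGen E

/-- `u ≺ v` : `u ⪯ v` and `u ≠ v`. -/
def precLT (E : V → V → Prop) (u v : V) : Prop := preceq E u v ∧ u ≠ v

/-- the set of common ancestors of `a` and `b`. -/
def ca (E : V → V → Prop) (a b : V) : Set V := {v | preceq E v a ∧ preceq E v b}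

/-- the set of most recent common ancestors of `a` and `b`:
the maximal elements of `ca E a b` with respect to `⪯`. -/
def mrca (E : V → V → Prop) (a b : V) : Set V :=
  {v | v ∈ ca E a b ∧ ∀ w ∈ ca E a b, preceq E v w → v = w}

/-- the set of descendants of `v` lying in `X`. -/
def desc (E : V → V → Prop) (X : Set V) (v : V) : Set V := {x | x ∈ X ∧ preceq E v x}

/-- `D(=C)` : the vertices whose set of descendants in `X` is exactly `C`. -/
def Deq (E : V → V → Prop) (X C : Set V) : Set V := {v | desc E X v = C}

/-- `D(⊆C)` : the vertices all of whose descendants in `X` lie in `C`. -/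
def Dsub (E : V → V → Prop) (X C : Set V) : Set V := {v | desc E X v ⊆ C}

/-- `S` separates `A` from `B`: every path in the underlying undirected graph of
`E` from an element of `A` to an element of `B` passes through some element of `S`. -/
def Separates (E : V → V → Prop) (S A B : Set V) : Prop :=
  ∀ x ∈ A, ∀ y ∈ B, x ∉ S →
    ¬ Relation.ReflTransGen (fun u v => (E u v ∨ E v u) ∧ v ∉ S) x y

/-- `C` is a tight `X`-cluster: it is a nonempty subset of `X` such that
`D(=C)` separates `C` from `X − C`. -/
def TightCluster (E : V → V → Prop) (X C : Set V) : Prop :=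
  C.Nonempty ∧ C ⊆ X ∧ Separates E (Deq E X C) C (X \ C)

/-- adjacency in the cousinship graph `Γ(C)`. -/
def cousinAdj (E : V → V → Prop) (X C : Set V) (x y : V) : Prop :=
  x ≠ y ∧ x ∈ C ∧ y ∈ C ∧
    ∃ v ∈ Dsub E X C, x ∈ desc E X v ∧ y ∈ desc E X v

/-- `C` is a strict `X`-cluster. -/
def StrictCluster (E : V → V → Prop) (X C : Set V) : Prop :=
  C ⊆ X ∧
  (∀ v : V, (C ∩ desc E X v).Nonempty → C ⊆ desc E X v ∨ desc E X v ⊆ C) ∧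
  (∀ x ∈ C, ∀ y ∈ C, Relation.ReflTransGen (cousinAdj E X C) x y)

/-- the relation `ab‖c`. -/
def relPar (E : V → V → Prop) (a b c : V) : Prop :=
  (ca E a b).Nonempty ∧ ∀ v ∈ mrca E a b,
    (∃ v' ∈ mrca E a c, precLT E v' v) ∧ (∃ v'' ∈ mrca E b c, precLT E v'' v)

/-- the relation `ab|c`. -/
def relBar (E : V → V → Prop) (a b c : V) : Prop :=
  (ca E a b).Nonempty ∧ ∀ v ∈ mrca E a b,
    ∃ v' ∈ mrca E a c ∪ mrca E b c, precLT E v' v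

/-- the relation `ab ⊥ c`. -/
def relPerp (E : V → V → Prop) (a b c : V) : Prop :=
  (ca E a c).Nonempty ∧ (ca E b c).Nonempty ∧
  ∀ v ∈ mrca E a c, ∀ v' ∈ mrca E b c,
    ∃ u ∈ mrca E a b, ∃ u' ∈ mrca E a b, precLT E v u ∧ precLT E v' u'

/-- `C` is an ancestral `X`-cluster. -/
def AncestralCluster (E : V → V → Prop) (X C : Set V) : Prop :=
  C ⊆ X ∧ ∀ x ∈ C, ∀ x' ∈ C, ∀ y ∈ X \ C, relPar E x x' y

/-- `C` is a relaxed ancestral `X`-cluster. -/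
def RelaxedAncestralCluster (E : V → V → Prop) (X C : Set V) : Prop :=
  C ⊆ X ∧ ∀ x ∈ C, ∀ x' ∈ C, ∀ y ∈ X \ C, relBar E x x' y

/-- `C` is a co-ancestral `X`-cluster. -/
def CoAncestralCluster (E : V → V → Prop) (X C : Set V) : Prop :=
  C ⊆ X ∧ ∀ x ∈ C, ∀ x' ∈ C, ∀ y ∈ X \ C, relPerp E x x' y

/-- `C` is an Apresjan `X`-cluster relative to `T`. -/
def ApresjanCluster (E : V → V → Prop) (X : Set V) (T : V → ℝ) (C : Set V) : Prop :=
  C ⊆ X ∧ ∃ t : ℝ,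
    (∀ x ∈ C, ∀ y ∈ C, ∃ v : V, preceq E v x ∧ preceq E v y ∧ t ≤ T v) ∧
    (∀ x ∈ C, ∀ y ∈ X \ C, ∀ v : V, preceq E v x → preceq E v y → T v < t)

/-- `C` is a strong Apresjan `X`-cluster relative to `T`. -/
def StrongApresjanCluster (E : V → V → Prop) (X : Set V) (T : V → ℝ) (C : Set V) : Prop :=
  C ⊆ X ∧ ∃ t : ℝ,
    (∀ x ∈ C, ∀ y ∈ C, ∀ v ∈ mrca E x y, t ≤ T v) ∧
    (∀ x ∈ C, ∀ y ∈ X \ C, ∀ v : V, preceq E v x → preceq E v y → T v < t)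

/-- Antisymmetry of `⪯` follows from acyclicity. -/
lemma preceq_antisymm {E : V → V → Prop} (hacyc : Irreflexive (Relation.TransGen E))
    {u v : V} (huv : preceq E u v) (hvu : preceq E v u) : u = v := by
  by_contra hne
  have h1 : Relation.TransGen E u v := by
    rcases (Relation.reflTransGen_iff_eq_or_transGen.mp huv) with h | h
    · exact absurd h.symm hne
    · exact h
  exact hacyc u (h1.trans_left hvu)

/-- Every common ancestor lies below some most recent common ancestor. -/
lemma exists_mrca [Fintype V] {E : V → V → Prop}
    (hacyc : Irreflexive (Relation.TransGen E)) {a b v : V} (hv : v ∈ ca E a b) :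
    ∃ m ∈ mrca E a b, preceq E v m := by
  have wf : WellFounded (fun u w : V => precLT E w u) := by
    have ht : IsTrans V (fun u w : V => precLT E w u) := by
      constructor
      intro x y z hxy hyz
      refine ⟨hyz.1.trans hxy.1, fun h => ?_⟩
      exact hyz.2 (preceq_antisymm hacyc hyz.1 (h ▸ hxy.1))
    have hi : IsIrrefl V (fun u w : V => precLT E w u) := ⟨fun x hx => hx.2 rfl⟩
    exact Finite.wellFounded_of_trans_of_irrefl _
  revert hv
  refine wf.induction (C := fun v => v ∈ ca E a b → ∃ m ∈ mrca E a b, preceq E v m) v ?_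
  intro v ih hv
  by_cases h : ∀ w ∈ ca E a b, preceq E v w → v = w
  · exact ⟨v, ⟨hv, h⟩, Relation.ReflTransGen.refl⟩
  · push_neg at h
    obtain ⟨w, hw, hvw, hne⟩ := h
    obtain ⟨m, hm, hwm⟩ := ih w ⟨hvw, hne⟩ hw
    exact ⟨m, hm, hvw.trans hwm⟩

/-- The contradiction lemma: `ab‖c` and `ac‖b` cannot both hold. -/
lemma not_relPar_both [Fintype V] {E : V → V → Prop}
    (hacyc : Irreflexive (Relation.TransGen E)) {a b c : V}
    (h1 : relPar E a b c) (h2 : relPar E a c b) : False := by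
  obtain ⟨⟨v₀, hv₀⟩, h1'⟩ := h1
  obtain ⟨v, hv, -⟩ := exists_mrca hacyc hv₀
  obtain ⟨⟨v', hv', hv'v⟩, -⟩ := h1' v hv
  obtain ⟨-, h2'⟩ := h2
  obtain ⟨⟨w, hw, hwv'⟩, -⟩ := h2' v' hv'
  -- w ∈ mrca a b, w ≺ v' ≺ v, and v ∈ ca a b, so by maximality of w, w = v
  have hwv : preceq E w v := hwv'.1.trans hv'v.1
  have hweq : w = v := hw.2 v hv.1 hwv
  subst hweq
  exact hv'v.2 (preceq_antisymm hacyc hv'v.1 hwv'.1)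

/-- The set of ancestral X-clusters of G forms a hierarchy. -/
theorem ancestral_clusters_hierarchy [Fintype V] (E : V → V → Prop) (X : Set V)
    (hacyc : Irreflexive (Relation.TransGen E))
    (C₁ C₂ : Set V) (h1 : AncestralCluster E X C₁) (h2 : AncestralCluster E X C₂) :
    C₁ ∩ C₂ = ∅ ∨ C₁ ∩ C₂ = C₁ ∨ C₁ ∩ C₂ = C₂ := by
  by_contra hcon
  push_neg at hcon
  obtain ⟨hne0, hne1, hne2⟩ := hcon
  obtain ⟨a, ha1, ha2⟩ := hne0
  have hb : ∃ x ∈ C₁, x ∉ C₂ := by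
    by_contra h
    push_neg at h
    exact hne1 (Set.ext fun x => ⟨fun hx => hx.1, fun hx => ⟨hx, h x hx⟩⟩)
  have hc : ∃ x ∈ C₂, x ∉ C₁ := by
    by_contra h
    push_neg at h
    exact hne2 (Set.ext fun x => ⟨fun hx => hx.2, fun hx => ⟨h x hx, hx⟩⟩)
  obtain ⟨b, hb1, hb2⟩ := hb
  obtain ⟨c, hc2, hc1⟩ := hc
  have hp1 : relPar E a b c := h1.2 a ha1 b hb1 c ⟨h2.1 hc2, hc1⟩
  have hp2 : relPar E a c b := h2.2 a ha2 c hc2 b ⟨h1.1 hb1, hb2⟩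
  exact not_relPar_both hacyc hp1 hp2
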